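/- arXiv:1804.10355 — 2 statements merged into one kernel-verified Lean document; each statement's English description precedes it below -/
import Mathlib

section
/- If a memory stack m is coherent with the empty memory (m ⌢ ∅), then every identifier occurring in m occurs exactly once in m. -/
/-- RCCS memory stacks: `m ::= ∅ | ⟨i, λ, P⟩.m | fork.m`. -/
inductive Mem (I L P : Type*) where
  | empty : Mem I L P
  | ev : I → L → P → Mem I L P → Mem I L P
  | fork : Mem I L P → Mem I L P

/-- The list of identifiers occurring in a memory stack. -/
def Mem.ids {I L P : Type*} : Mem I L P → List I
  | .empty => []
  | .ev i _ _ m => i :: m.ids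
  | .fork m => m.ids

/-- The coherence relation on memory stacks: the smallest symmetric relation closed under
the rules em., ev., syn. and fo., where `bar` is the complement on labels. -/
inductive Coh {I L P : Type*} (bar : L → L) : Mem I L P → Mem I L P → Prop where
  | symm {m m'} : Coh bar m m' → Coh bar m' m
  | em : Coh bar .empty .empty
  | ev {m m' : Mem I L P} {i l p} : Coh bar m m' →
      i ∉ m.ids → i ∉ m'.ids → Coh bar (.ev i l p m) m'
  | syn {m m' : Mem I L P} {i l p q} : Coh bar m m' →
      i ∉ m.ids → i ∉ m'.ids → Coh bar (.ev i l p m) (.ev i (bar l) q m')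
  | fo {m : Mem I L P} : Coh bar m .empty → Coh bar (.fork m) (.fork m)

/-! Every coherence rule that pushes an identifier onto a stack requires it to be fresh for the
stack underneath, so both stacks of a coherent pair have duplicate-free identifier lists. -/

theorem Coh.nodup_ids {I L P : Type*} {bar : L → L} {m m' : Mem I L P}
    (h : Coh bar m m') : m.ids.Nodup ∧ m'.ids.Nodup := by
  induction h with
  | symm _ ih => exact ih.symm
  | em => exact ⟨List.nodup_nil, List.nodup_nil⟩
  | ev _ hi _ ih => exact ⟨List.nodup_cons.2 ⟨hi, ih.1⟩, ih.2⟩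
  | syn _ hi hi' ih => exact ⟨List.nodup_cons.2 ⟨hi, ih.1⟩, List.nodup_cons.2 ⟨hi', ih.2⟩⟩
  | fo _ ih => exact ⟨ih.1, ih.1⟩

/-- If a memory stack is coherent with the empty memory, every identifier occurring
in it occurs exactly once. -/
theorem coherent_ids_unique {I L P : Type*} [DecidableEq I] (bar : L → L)
    (m : Mem I L P) (h : Coh bar m Mem.empty) :
    ∀ i ∈ m.ids, m.ids.count i = 1 :=
  fun _ hi => List.count_eq_one_of_mem h.nodup_ids.1 hi
end

section
/- The encoding of a single memory stack is a linear order (chain) under causality: for any memory stack m, the identified configuration structure ⟦m⟧ has configurations totally ordered by inclusion, and hence has a unique maximal configuration. -/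
/-- The number of memory-event entries in a memory stack. -/
def Mem.numE {I L P : Type*} : Mem I L P → ℕ
  | .empty => 0
  | .ev _ _ _ m => m.numE + 1
  | .fork m => m.numE

/-- The events of the encoding `⟦m⟧` of a memory stack, as natural numbers:
each memory event adds one fresh event. -/
def encE {I L P : Type*} : Mem I L P → Set ℕ
  | .empty => ∅
  | .fork m => encE m
  | .ev _ _ _ m => insert m.numE (encE m)

/-- The configurations of the encoding `⟦m⟧` of a memory stack: `⟦∅⟧` has the single
configuration `∅`, forks are forgotten, and a memory event adds a fresh event on top of
every maximal configuration. -/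
def encC {I L P : Type*} : Mem I L P → Set (Set ℕ)
  | .empty => {∅}
  | .fork m => encC m
  | .ev _ _ _ m =>
      encC m ∪ { y | ∃ x ∈ encC m, (∀ z ∈ encC m, x ⊆ z → x = z) ∧ y = insert m.numE x }

/-- The identifier function of the encoding `⟦m⟧` of a memory stack. -/
def encId {I L P : Type*} : Mem I L P → ℕ → Option I
  | .empty => fun _ => none
  | .fork m => encId m
  | .ev i _ _ m => fun k => if k = m.numE then some i else encId m k

theorem IsGreatest.maximal_subset_iff_eq {α : Type*} {s : Set (Set α)} {t x : Set α}
    (ht : IsGreatest s t) : (x ∈ s ∧ ∀ y ∈ s, x ⊆ y → x = y) ↔ x = t :=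
  maximal_subset_iff.symm.trans ht.maximal_iff

theorem IsGreatest.insert_of_le {α : Type*} [Preorder α] {s : Set α} {a b : α}
    (hb : IsGreatest s b) (hba : b ≤ a) : IsGreatest (insert a s) a := by
  refine ⟨Set.mem_insert a s, ?_⟩
  rw [upperBounds_insert]
  exact ⟨le_rfl, fun _ hy => (hb.2 hy).trans hba⟩

section Encoding

variable {I L P : Type*}

theorem encC_ev_of_isGreatest {m : Mem I L P} {t : Set ℕ} (ht : IsGreatest (encC m) t)
    (i : I) (l : L) (p : P) : encC (.ev i l p m) = insert (insert m.numE t) (encC m) := by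
  ext y
  simp only [encC, Set.mem_union, Set.mem_ofPred_eq, Set.mem_insert_iff, ← and_assoc,
    ht.maximal_subset_iff_eq, exists_eq_left]
  exact or_comm

theorem exists_isGreatest_encC (m : Mem I L P) : ∃ t, IsGreatest (encC m) t := by
  induction m with
  | empty => exact ⟨∅, isGreatest_singleton⟩
  | fork m ih => exact ih
  | ev i l p m ih =>
    obtain ⟨t, ht⟩ := ih
    rw [encC_ev_of_isGreatest ht]
    exact ⟨_, ht.insert_of_le (Set.subset_insert _ _)⟩

theorem isChain_encC (m : Mem I L P) : IsChain (· ⊆ ·) (encC m) := by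
  induction m with
  | empty => exact Set.subsingleton_singleton.isChain
  | fork m ih => exact ih
  | ev i l p m ih =>
    obtain ⟨t, ht⟩ := exists_isGreatest_encC m
    rw [encC_ev_of_isGreatest ht]
    exact ih.insert fun y hy _ => Or.inr ((ht.2 hy).trans (Set.subset_insert _ _))

end Encoding

/-- The encoding of a single memory stack is a chain: its configurations are totally
ordered by inclusion, and hence it has a unique maximal configuration. -/
theorem encoding_is_chain {I L P : Type*} (m : Mem I L P) :
    (∀ x ∈ encC m, ∀ y ∈ encC m, x ⊆ y ∨ y ⊆ x) ∧
    (∃! x, x ∈ encC m ∧ ∀ y ∈ encC m, x ⊆ y → x = y) := by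
  obtain ⟨t, ht⟩ := exists_isGreatest_encC m
  refine ⟨fun x hx y hy => (isChain_encC m).total hx hy, t, ?_, ?_⟩
  · exact ht.maximal_subset_iff_eq.2 rfl
  · exact fun x hx => ht.maximal_subset_iff_eq.1 hx
end
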